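/- Let f : 𝕊^n → ℝ be convex (possibly nonsmooth) and X* ∈ S_n. Suppose there exists a subgradient G* ∈ ∂f(X*) satisfying ⟨X − X*, G*⟩ ≥ 0 for all X ∈ S_n, and λ_{n-1}(G*) − λ_n(G*) = δ > 0. Then X* is the unique minimizer of f over S_n, X* = u u ᵀ where u is the unit eigenvector of G* with smallest eigenvalue, and for all X ∈ S_n: ‖X − X*‖_F² ≤ (2/δ)(f(X) − f(X*)). -/

import Mathlib

open Matrix
open scoped RealInnerProductSpace

noncomputable section

/-- Trace (Frobenius) inner product on real square matrices. -/
def tinner {n : ℕ} (A B : Matrix (Fin n) (Fin n) ℝ) : ℝ := ∑ i, ∑ j, A i j * B i j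

/-- Squared Frobenius norm. -/
def frobSq {n : ℕ} (A : Matrix (Fin n) (Fin n) ℝ) : ℝ := ∑ i, ∑ j, (A i j)^2

/-- Frobenius norm. -/
def frobNorm {n : ℕ} (A : Matrix (Fin n) (Fin n) ℝ) : ℝ := Real.sqrt (frobSq A)

/-- The spectrahedron: positive semidefinite matrices with unit trace. -/
def Spectra (n : ℕ) : Set (Matrix (Fin n) (Fin n) ℝ) :=
  {X | X.PosSemidef ∧ X.trace = 1}

/-- Eigenvalues of a symmetric matrix sorted in non-decreasing order, so that
`sortedEigs hA 0` is the smallest eigenvalue (λ_n in the paper's non-increasing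
convention), `sortedEigs hA 1` is the second smallest (λ_{n-1}), and in general
`sortedEigs hA i = λ_{n-i}`. -/
def sortedEigs {n : ℕ} {A : Matrix (Fin n) (Fin n) ℝ} (hA : A.IsHermitian) : Fin n → ℝ :=
  hA.eigenvalues ∘ Tuple.sort hA.eigenvalues

/-! Let `u` be a unit eigenvector of `G*` for its smallest eigenvalue `μ`. Expanding `X ∈ S_n` in
an eigenbasis of `G*` gives `⟨X, G*⟩ ≥ μ + δ (1 - uᵀ X u)`, while `‖X‖_F ≤ Tr X = 1` gives
`‖X - u uᵀ‖_F² ≤ 2 (1 - uᵀ X u)`; together, `δ ‖X - u uᵀ‖_F² ≤ 2 (⟨X, G*⟩ - μ)` on `S_n`.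
Testing the variational inequality at `u uᵀ` gives `⟨X*, G*⟩ ≤ μ`, which forces `X* = u uᵀ`.
Then `⟨X, G*⟩ - μ = ⟨X - X*, G*⟩ ≤ f X - f X*` by the subgradient inequality. -/

lemma Matrix.PosSemidef.apply_sq_le_mul_diag {m : Type*} [Finite m] {A : Matrix m m ℝ}
    (hA : A.PosSemidef) (i j : m) : A i j ^ 2 ≤ A i i * A j j := by
  obtain ⟨k, v, rfl⟩ := posSemidef_iff_eq_sum_vecMulVec.mp hA
  simpa [sum_apply, vecMulVec_apply, sq] using Finset.sum_mul_sq_le_sq_mul_sq Finset.univ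
    (fun l => v l i) (fun l => v l j)

section Frobenius

variable {n : ℕ}

lemma tinner_comm (A B : Matrix (Fin n) (Fin n) ℝ) : tinner A B = tinner B A := by
  simp only [tinner, mul_comm]

lemma tinner_sub_left (A B C : Matrix (Fin n) (Fin n) ℝ) :
    tinner (A - B) C = tinner A C - tinner B C := by
  simp only [tinner, Matrix.sub_apply, sub_mul, Finset.sum_sub_distrib]

lemma tinner_eq_trace (A B : Matrix (Fin n) (Fin n) ℝ) : tinner A B = (Aᵀ * B).trace := by
  simp only [tinner, trace, diag, mul_apply, transpose_apply]
  exact Finset.sum_comm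

lemma tinner_vecMulVec_self (A : Matrix (Fin n) (Fin n) ℝ) (u : Fin n → ℝ) :
    tinner A (vecMulVec u u) = u ⬝ᵥ A *ᵥ u := by
  simp only [tinner, vecMulVec_apply, dotProduct, mulVec, Finset.mul_sum]
  exact Finset.sum_congr rfl fun i _ => Finset.sum_congr rfl fun j _ => by ring

lemma frobSq_nonneg (A : Matrix (Fin n) (Fin n) ℝ) : 0 ≤ frobSq A := by
  unfold frobSq; positivity

lemma frobSq_eq_zero_iff {A : Matrix (Fin n) (Fin n) ℝ} : frobSq A = 0 ↔ A = 0 := by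
  refine ⟨fun h => ?_, fun h => by simp [h, frobSq]⟩
  ext i j
  have hrow := (Finset.sum_eq_zero_iff_of_nonneg fun i _ => by positivity).mp h i
    (Finset.mem_univ _)
  exact pow_eq_zero_iff two_ne_zero |>.mp <|
    (Finset.sum_eq_zero_iff_of_nonneg fun j _ => sq_nonneg _).mp hrow j (Finset.mem_univ _)

lemma frobSq_sub (A B : Matrix (Fin n) (Fin n) ℝ) :
    frobSq (A - B) = frobSq A - 2 * tinner A B + frobSq B := by
  simp only [frobSq, tinner, Matrix.sub_apply, sub_sq, Finset.sum_add_distrib,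
    Finset.sum_sub_distrib, Finset.mul_sum, mul_assoc]

lemma frobSq_vecMulVec_self (u : Fin n → ℝ) : frobSq (vecMulVec u u) = (u ⬝ᵥ u) ^ 2 := by
  simp only [frobSq, vecMulVec_apply, dotProduct, sq, Finset.sum_mul_sum]
  exact Finset.sum_congr rfl fun i _ => Finset.sum_congr rfl fun j _ => by ring

lemma vecMulVec_self_mem_Spectra {u : Fin n → ℝ} (hu : u ⬝ᵥ u = 1) :
    vecMulVec u u ∈ Spectra n :=
  ⟨by simpa using posSemidef_vecMulVec_self_star u, by rw [trace_vecMulVec, hu]⟩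

lemma frobSq_le_trace_sq {A : Matrix (Fin n) (Fin n) ℝ} (hA : A.PosSemidef) :
    frobSq A ≤ A.trace ^ 2 := by
  calc frobSq A ≤ ∑ i, ∑ j, A i i * A j j :=
        Finset.sum_le_sum fun i _ => Finset.sum_le_sum fun j _ => hA.apply_sq_le_mul_diag i j
    _ = A.trace ^ 2 := by rw [trace, sq, Finset.sum_mul_sum]; rfl

lemma frobSq_sub_vecMulVec_le {X : Matrix (Fin n) (Fin n) ℝ} (hX : X ∈ Spectra n)
    {u : Fin n → ℝ} (hu : u ⬝ᵥ u = 1) :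
    frobSq (X - vecMulVec u u) ≤ 2 * (1 - u ⬝ᵥ X *ᵥ u) := by
  have hX1 : frobSq X ≤ 1 := by simpa [hX.2] using frobSq_le_trace_sq hX.1
  rw [frobSq_sub, tinner_vecMulVec_self, frobSq_vecMulVec_self, hu]
  linarith

end Frobenius

lemma le_sum_mul_of_gap {ι : Type*} [Fintype ι] [DecidableEq ι] {w y : ι → ℝ} {i₀ : ι}
    {δ : ℝ} (hy : ∀ i, 0 ≤ y i) (hgap : ∀ i ≠ i₀, w i₀ + δ ≤ w i) :
    w i₀ * ∑ i, y i + δ * (∑ i, y i - y i₀) ≤ ∑ i, w i * y i := by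
  have hterm (i : ι) : w i₀ * y i + δ * (y i - if i = i₀ then y i else 0) ≤ w i * y i := by
    by_cases h : i = i₀
    · simp [h]
    · simpa [h, add_mul] using mul_le_mul_of_nonneg_right (hgap i h) (hy i)
  simpa [Finset.mul_sum, Finset.sum_add_distrib, Finset.sum_sub_distrib, mul_sub]
    using Finset.sum_le_sum (s := Finset.univ) fun i _ => hterm i

lemma Tuple.apply_sort_zero_le {n : ℕ} [NeZero n] {α : Type*} [LinearOrder α] (f : Fin n → α)
    (i : Fin n) : f (Tuple.sort f 0) ≤ f i := by
  simpa using Tuple.monotone_sort f (Fin.zero_le ((Tuple.sort f).symm i))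

lemma Tuple.apply_sort_one_le {n : ℕ} [NeZero n] {α : Type*} [LinearOrder α] (f : Fin n → α)
    {i : Fin n} (hi : i ≠ Tuple.sort f 0) : f (Tuple.sort f 1) ≤ f i := by
  have h0 : (Tuple.sort f).symm i ≠ 0 := fun h => hi (by rw [← h, Equiv.apply_symm_apply])
  simpa using Tuple.monotone_sort f (Fin.one_le_of_ne_zero h0)

namespace Matrix.IsHermitian

variable {n : ℕ} {G : Matrix (Fin n) (Fin n) ℝ} (hG : G.IsHermitian)

lemma star_eigenvectorUnitary_mul_mul_apply_self (X : Matrix (Fin n) (Fin n) ℝ) (i : Fin n) :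
    (star (hG.eigenvectorUnitary : Matrix (Fin n) (Fin n) ℝ) * X * hG.eigenvectorUnitary) i i =
      ⇑(hG.eigenvectorBasis i) ⬝ᵥ X *ᵥ ⇑(hG.eigenvectorBasis i) := by
  simp only [mul_apply, star_apply, eigenvectorUnitary_apply, star_trivial, dotProduct, mulVec,
    Finset.mul_sum, Finset.sum_mul]
  rw [Finset.sum_comm]
  exact Finset.sum_congr rfl fun j _ => Finset.sum_congr rfl fun k _ => by ring

lemma tinner_eq_sum_eigenvalues (X : Matrix (Fin n) (Fin n) ℝ) :
    tinner X G = ∑ i, hG.eigenvalues i *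
      (⇑(hG.eigenvectorBasis i) ⬝ᵥ X *ᵥ ⇑(hG.eigenvectorBasis i)) := by
  rw [tinner_comm, tinner_eq_trace, ← conjTranspose_eq_transpose_of_trivial, hG.eq]
  conv_lhs => rw [hG.spectral_theorem]
  rw [Unitary.conjStarAlgAut_apply, Matrix.mul_assoc, trace_mul_comm, ← Matrix.mul_assoc]
  simp only [trace, diag, mul_diagonal, star_eigenvectorUnitary_mul_mul_apply_self]
  exact Finset.sum_congr rfl fun i _ => by simp [mul_comm]

lemma sum_dotProduct_mulVec_eigenvectorBasis (X : Matrix (Fin n) (Fin n) ℝ) :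
    ∑ i, ⇑(hG.eigenvectorBasis i) ⬝ᵥ X *ᵥ ⇑(hG.eigenvectorBasis i) = X.trace := by
  simp only [← star_eigenvectorUnitary_mul_mul_apply_self]
  change (star (hG.eigenvectorUnitary : Matrix (Fin n) (Fin n) ℝ) * X *
    hG.eigenvectorUnitary).trace = X.trace
  rw [trace_mul_cycle, Unitary.mul_star_self_of_mem hG.eigenvectorUnitary.2, Matrix.one_mul]

section MinEigenvector

variable [NeZero n]

def minEigenvector : Fin n → ℝ := ⇑(hG.eigenvectorBasis (Tuple.sort hG.eigenvalues 0))

lemma dotProduct_minEigenvector_self : hG.minEigenvector ⬝ᵥ hG.minEigenvector = 1 := by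
  have h : ⟪hG.eigenvectorBasis (Tuple.sort hG.eigenvalues 0),
      hG.eigenvectorBasis (Tuple.sort hG.eigenvalues 0)⟫ = 1 := by
    rw [real_inner_self_eq_norm_sq, hG.eigenvectorBasis.orthonormal.1, one_pow]
  rwa [EuclideanSpace.inner_eq_star_dotProduct, star_trivial] at h

lemma mulVec_minEigenvector : G *ᵥ hG.minEigenvector = sortedEigs hG 0 • hG.minEigenvector :=
  hG.mulVec_eigenvectorBasis _

lemma tinner_vecMulVec_minEigenvector :
    tinner (vecMulVec hG.minEigenvector hG.minEigenvector) G = sortedEigs hG 0 := by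
  rw [tinner_comm, tinner_vecMulVec_self, mulVec_minEigenvector, dotProduct_smul,
    dotProduct_minEigenvector_self, smul_eq_mul, mul_one]

lemma sortedEigs_zero_add_gap_mul_le_tinner {X : Matrix (Fin n) (Fin n) ℝ} (hX : X ∈ Spectra n) :
    sortedEigs hG 0 + (sortedEigs hG 1 - sortedEigs hG 0) *
      (1 - hG.minEigenvector ⬝ᵥ X *ᵥ hG.minEigenvector) ≤ tinner X G := by
  classical
  have h := le_sum_mul_of_gap (w := hG.eigenvalues)
    (y := fun i => ⇑(hG.eigenvectorBasis i) ⬝ᵥ X *ᵥ ⇑(hG.eigenvectorBasis i))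
    (i₀ := Tuple.sort hG.eigenvalues 0) (δ := sortedEigs hG 1 - sortedEigs hG 0)
    (fun i => hX.1.dotProduct_mulVec_nonneg _)
    (fun i hi => by simpa [sortedEigs] using Tuple.apply_sort_one_le hG.eigenvalues hi)
  rw [sum_dotProduct_mulVec_eigenvectorBasis, hX.2, mul_one] at h
  rw [tinner_eq_sum_eigenvalues]
  exact h

lemma gap_mul_frobSq_sub_le {X : Matrix (Fin n) (Fin n) ℝ} (hX : X ∈ Spectra n) :
    (sortedEigs hG 1 - sortedEigs hG 0) *
      frobSq (X - vecMulVec hG.minEigenvector hG.minEigenvector) ≤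
      2 * (tinner X G - sortedEigs hG 0) := by
  have hgap : 0 ≤ sortedEigs hG 1 - sortedEigs hG 0 :=
    sub_nonneg.mpr (Tuple.apply_sort_zero_le hG.eigenvalues _)
  have hdist := frobSq_sub_vecMulVec_le hX hG.dotProduct_minEigenvector_self
  have hkey := hG.sortedEigs_zero_add_gap_mul_le_tinner hX
  nlinarith

lemma eq_vecMulVec_minEigenvector_of_tinner_le (hgap : sortedEigs hG 0 < sortedEigs hG 1)
    {X : Matrix (Fin n) (Fin n) ℝ} (hX : X ∈ Spectra n) (hle : tinner X G ≤ sortedEigs hG 0) :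
    X = vecMulVec hG.minEigenvector hG.minEigenvector := by
  have h := hG.gap_mul_frobSq_sub_le hX
  have h0 : frobSq (X - vecMulVec hG.minEigenvector hG.minEigenvector) = 0 :=
    le_antisymm (nonpos_of_mul_nonpos_right (by linarith) (sub_pos.mpr hgap)) (frobSq_nonneg _)
  exact sub_eq_zero.mp (frobSq_eq_zero_iff.mp h0)

end MinEigenvector

end Matrix.IsHermitian

theorem stmt13_general {n : ℕ} (f : Matrix (Fin (n+2)) (Fin (n+2)) ℝ → ℝ)
    (Xs : Matrix (Fin (n+2)) (Fin (n+2)) ℝ) (hXs : Xs ∈ Spectra (n+2))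
    (Gs : Matrix (Fin (n+2)) (Fin (n+2)) ℝ)
    (hsub : ∀ Y, f Xs + tinner Gs (Y - Xs) ≤ f Y)
    (hvi : ∀ X ∈ Spectra (n+2), 0 ≤ tinner (X - Xs) Gs)
    (hG : Gs.IsHermitian)
    (δ : ℝ) (hδ : δ = sortedEigs hG 1 - sortedEigs hG 0) (hδpos : 0 < δ) :
    (∀ X ∈ Spectra (n+2), f Xs ≤ f X) ∧
    (∀ X ∈ Spectra (n+2), f X = f Xs → X = Xs) ∧
    (∃ u : Fin (n+2) → ℝ, (∑ i, (u i)^2 = 1) ∧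
      Gs *ᵥ u = sortedEigs hG 0 • u ∧ Xs = vecMulVec u u) ∧
    (∀ X ∈ Spectra (n+2), frobSq (X - Xs) ≤ (2 / δ) * (f X - f Xs)) := by
  have hu := hG.dotProduct_minEigenvector_self
  have hXs_eq : Xs = vecMulVec hG.minEigenvector hG.minEigenvector := by
    have hvi_u := hvi _ (vecMulVec_self_mem_Spectra hu)
    rw [tinner_sub_left, hG.tinner_vecMulVec_minEigenvector] at hvi_u
    exact hG.eq_vecMulVec_minEigenvector_of_tinner_le (by linarith) hXs (by linarith)
  have hXs_val : tinner Xs Gs = sortedEigs hG 0 := hXs_eq ▸ hG.tinner_vecMulVec_minEigenvector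
  have hlin (X) : tinner X Gs - sortedEigs hG 0 ≤ f X - f Xs := by
    linarith [hsub X, tinner_comm Gs (X - Xs), tinner_sub_left X Xs Gs]
  have hquad (X) (hX : X ∈ Spectra (n+2)) : frobSq (X - Xs) ≤ (2 / δ) * (f X - f Xs) := by
    have h := hδ ▸ hG.gap_mul_frobSq_sub_le hX
    rw [← hXs_eq] at h
    rw [div_mul_eq_mul_div, le_div_iff₀ hδpos]
    linarith [hlin X]
  refine ⟨fun X hX => ?_, fun X hX hfX => ?_,
    ⟨hG.minEigenvector, ?_, hG.mulVec_minEigenvector, hXs_eq⟩, hquad⟩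
  · linarith [hsub X, tinner_comm Gs (X - Xs), hvi X hX]
  · have h := hquad X hX
    rw [hfX, sub_self, mul_zero] at h
    exact sub_eq_zero.mp (frobSq_eq_zero_iff.mp (le_antisymm h (frobSq_nonneg _)))
  · simpa [dotProduct, sq] using hu

/-- Nonsmooth case. If `f` is convex, `Gs` is a subgradient of `f` at `Xs ∈ S_n`
satisfying the variational inequality `⟨X − Xs, Gs⟩ ≥ 0` over `S_n`, and `Gs` has a positive
gap `δ` between its two smallest eigenvalues, then `Xs` is the unique minimizer of `f` over
`S_n`, `Xs = u uᵀ` for the unit eigenvector `u` of `Gs` for the smallest eigenvalue, and the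
quadratic growth `‖X − Xs‖_F² ≤ (2/δ)(f(X) − f(Xs))` holds on `S_n`. -/
theorem stmt13 {n : ℕ} (f : Matrix (Fin (n+2)) (Fin (n+2)) ℝ → ℝ)
    (hconv : ConvexOn ℝ Set.univ f)
    (Xs : Matrix (Fin (n+2)) (Fin (n+2)) ℝ) (hXs : Xs ∈ Spectra (n+2))
    (Gs : Matrix (Fin (n+2)) (Fin (n+2)) ℝ)
    (hsub : ∀ Y, f Xs + tinner Gs (Y - Xs) ≤ f Y)
    (hvi : ∀ X ∈ Spectra (n+2), 0 ≤ tinner (X - Xs) Gs)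
    (hG : Gs.IsHermitian)
    (δ : ℝ) (hδ : δ = sortedEigs hG 1 - sortedEigs hG 0) (hδpos : 0 < δ) :
    (∀ X ∈ Spectra (n+2), f Xs ≤ f X) ∧
    (∀ X ∈ Spectra (n+2), f X = f Xs → X = Xs) ∧
    (∃ u : Fin (n+2) → ℝ, (∑ i, (u i)^2 = 1) ∧
      Gs *ᵥ u = sortedEigs hG 0 • u ∧ Xs = vecMulVec u u) ∧
    (∀ X ∈ Spectra (n+2), frobSq (X - Xs) ≤ (2 / δ) * (f X - f Xs)) :=
  stmt13_general f Xs hXs Gs hsub hvi hG δ hδ hδpos
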